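/- arXiv:2401.03318 — 9 statements merged into one kernel-verified Lean document; each statement's English description precedes it below -/
import Mathlib

section
/- For every integer n ≥ 2, the number (n+1)(n+2)/2 is not a power of 3; equivalently, there is no k ∈ ℕ with (n+1)(n+2) = 2·3^k. In particular, log₃((n+1)(n+2)/2) is not an integer for n ≥ 2. -/
/-!
The factors `n + 1` and `n + 2` are coprime, so the prime power `3 ^ k` divides one of them and
the other one divides `2`; this forces `n ≤ 1`. The real and logarithmic forms reduce to this,
since a real number `x ≥ 1` with integral `logb 3 x` is a natural power of `3`.
-/

lemma Nat.dvd_two_or_dvd_two_of_mul_eq_two_mul_prime_pow {p a b k : ℕ} (hp : p.Prime)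
    (hab : a.Coprime b) (h : a * b = 2 * p ^ k) : a ∣ 2 ∨ b ∣ 2 := by
  rcases Nat.eq_zero_or_pos k with rfl | hk
  · exact .inl ⟨b, by simpa using h.symm⟩
  have hpk : 0 < p ^ k := pow_pos hp.pos k
  have hdvd : p ^ k ∣ a * b := ⟨2, by rw [h, mul_comm]⟩
  rcases (hab.isPrimePow_dvd_mul (hp.isPrimePow.pow hk.ne')).mp hdvd with ⟨c, rfl⟩ | ⟨c, rfl⟩
  · refine .inr ⟨c, Nat.eq_of_mul_eq_mul_left hpk ?_⟩
    linarith
  · refine .inl ⟨c, Nat.eq_of_mul_eq_mul_left hpk ?_⟩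
    linarith

lemma succ_mul_add_two_ne_two_mul_three_pow {n : ℕ} (hn : 2 ≤ n) (k : ℕ) :
    (n + 1) * (n + 2) ≠ 2 * 3 ^ k := by
  intro h
  have hcop : (n + 1).Coprime (n + 1 + 1) :=
    Nat.coprime_self_add_right.mpr (Nat.coprime_one_right _)
  rcases Nat.dvd_two_or_dvd_two_of_mul_eq_two_mul_prime_pow Nat.prime_three hcop h with hd | hd
  all_goals have := Nat.le_of_dvd two_pos hd; omega

lemma Real.exists_nat_pow_eq_of_logb_eq_intCast {b x : ℝ} (hb : 1 < b) (hx : 1 ≤ x) {m : ℤ}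
    (hm : Real.logb b x = m) : ∃ k : ℕ, x = b ^ k := by
  lift m to ℕ using by exact_mod_cast hm ▸ Real.logb_nonneg hb hx
  refine ⟨m, ?_⟩
  rw [← Real.rpow_natCast, ← Int.cast_natCast, ← hm,
    Real.rpow_logb (by linarith) hb.ne' (by linarith)]

theorem stmt_3 (n : ℕ) (hn : 2 ≤ n) :
    (¬ ∃ k : ℕ, (n + 1) * (n + 2) = 2 * 3 ^ k) ∧
    (¬ ∃ k : ℕ, ((n : ℝ) + 1) * ((n : ℝ) + 2) / 2 = 3 ^ k) ∧
    ¬ ∃ m : ℤ, Real.logb 3 (((n : ℝ) + 1) * ((n : ℝ) + 2) / 2) = (m : ℝ) := by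
  have hnat : ¬ ∃ k : ℕ, (n + 1) * (n + 2) = 2 * 3 ^ k :=
    fun ⟨k, hk⟩ => succ_mul_add_two_ne_two_mul_three_pow hn k hk
  have hreal : ¬ ∃ k : ℕ, ((n : ℝ) + 1) * ((n : ℝ) + 2) / 2 = 3 ^ k := by
    rintro ⟨k, hk⟩
    refine hnat ⟨k, ?_⟩
    have : ((n : ℝ) + 1) * ((n : ℝ) + 2) = 2 * 3 ^ k := by
      linarith [(div_eq_iff two_ne_zero).mp hk]
    exact_mod_cast this
  refine ⟨hnat, hreal, fun ⟨m, hm⟩ => hreal ?_⟩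
  have hn' : (2 : ℝ) ≤ n := by exact_mod_cast hn
  exact Real.exists_nat_pow_eq_of_logb_eq_intCast (by norm_num) (by nlinarith) hm
end

section
/- Let f₁(x) = log₃(x²) and f₂(x) = log₃((x+1)(x+2)/2) for real x > 0. For every real x ≥ a₃ = 3√3: if x ∈ [a_r, b_r) for some integer r ≥ 3 then fr(f₁(x)) < fr(f₂(x)), and if x ∈ [b_r, a_{r+1}) for some integer r ≥ 3 then fr(f₁(x)) ≥ fr(f₂(x)). -/
/-- `a r = 3^(r/2)`. -/
noncomputable def a (r : ℕ) : ℝ := (3 : ℝ) ^ ((r : ℝ) / 2)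

/-- `b r = (-3 + √(8·3^r + 1))/2`. -/
noncomputable def b (r : ℕ) : ℝ := (-3 + Real.sqrt (8 * 3 ^ r + 1)) / 2

/-- `f₁ x = log₃ (x²)`. -/
noncomputable def f₁ (x : ℝ) : ℝ := Real.logb 3 (x ^ 2)

/-- `f₂ x = log₃ ((x+1)(x+2)/2)`. -/
noncomputable def f₂ (x : ℝ) : ℝ := Real.logb 3 ((x + 1) * (x + 2) / 2)

lemma floor_logb3 (y : ℝ) (k : ℤ) (h0 : 0 < y) (h1 : (3:ℝ) ^ (k:ℝ) ≤ y)
    (h2 : y < (3:ℝ) ^ ((k:ℝ) + 1)) : ⌊Real.logb 3 y⌋ = k := by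
  have hb : (1:ℝ) < 3 := by norm_num
  rw [Int.floor_eq_iff]
  refine ⟨(Real.le_logb_iff_rpow_le hb h0).2 h1, ?_⟩
  push_cast
  exact (Real.logb_lt_iff_lt_rpow hb h0).2 h2

lemma asq (r : ℕ) : (a r) ^ 2 = (3:ℝ) ^ r := by
  rw [a, ← Real.rpow_natCast ((3:ℝ) ^ ((r:ℝ)/2)) 2, ← Real.rpow_mul (by norm_num)]
  rw [show (r:ℝ)/2 * (2:ℕ) = (r:ℝ) by push_cast; ring, Real.rpow_natCast]

-- Algebraic bounds for case 1: A² = R, A ≤ x < (-3+s)/2, s² = 8R+1.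
lemma case1_bounds (x A R s : ℝ) (hR : 27 ≤ R) (hA2 : A ^ 2 = R) (hA : 0 ≤ A)
    (hs : s ^ 2 = 8 * R + 1) (hs0 : 0 ≤ s) (hax : A ≤ x) (hxb : x < (-3 + s) / 2) :
    R ≤ x ^ 2 ∧ x ^ 2 < 3 * R ∧ R / 3 ≤ (x + 1) * (x + 2) / 2 ∧
      (x + 1) * (x + 2) / 2 < R ∧ 2 * x ^ 2 < 3 * ((x + 1) * (x + 2)) := by
  have hs14 : (14:ℝ) ≤ s := by nlinarith
  have hxpos : 0 < x := by nlinarith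
  refine ⟨by nlinarith, by nlinarith, by nlinarith,
    by nlinarith [mul_pos (sub_pos.2 hxb) (by linarith : (0:ℝ) < (-3 + s)/2 + x + 3)],
    by nlinarith⟩

-- Algebraic bounds for case 2: A² = 3R, 9 ≤ A, (-3+s)/2 ≤ x < A, s² = 8R+1.
lemma case2_bounds (x A R s : ℝ) (hR : 27 ≤ R) (hA2 : A ^ 2 = 3 * R) (hA : 9 ≤ A)
    (hs : s ^ 2 = 8 * R + 1) (hs0 : 0 ≤ s) (hbx : (-3 + s) / 2 ≤ x) (hxA : x < A) :
    R ≤ x ^ 2 ∧ x ^ 2 < 3 * R ∧ R ≤ (x + 1) * (x + 2) / 2 ∧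
      (x + 1) * (x + 2) / 2 < 3 * R ∧ (x + 1) * (x + 2) / 2 ≤ x ^ 2 := by
  have hs14 : (14:ℝ) ≤ s := by nlinarith
  have hx5 : (11/2:ℝ) ≤ x := by linarith
  have hbsq : R ≤ ((-3 + s) / 2) ^ 2 := by
    nlinarith [sq_nonneg (2*R + 5 - 3*s),
      mul_nonneg (by linarith : (0:ℝ) ≤ R - 27) (by linarith : (0:ℝ) ≤ R)]
  refine ⟨le_trans hbsq (by nlinarith), by nlinarith,
    by nlinarith [mul_nonneg (sub_nonneg.2 hbx) (by linarith : (0:ℝ) ≤ x + (-3 + s)/2 + 3)],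
    by nlinarith [mul_pos (sub_pos.2 hxA) (by linarith : (0:ℝ) < A + x + 3)],
    by nlinarith⟩

theorem stmt_4 (x : ℝ) (hx : a 3 ≤ x) :
    (∀ r : ℕ, 3 ≤ r → a r ≤ x → x < b r →
      Int.fract (f₁ x) < Int.fract (f₂ x)) ∧
    (∀ r : ℕ, 3 ≤ r → b r ≤ x → x < a (r + 1) →
      Int.fract (f₂ x) ≤ Int.fract (f₁ x)) := by
  have hb3 : (1:ℝ) < 3 := by norm_num
  have hxpos : 0 < x := lt_of_lt_of_le (Real.rpow_pos_of_pos (by norm_num) _) hx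
  have hypos : 0 < (x + 1) * (x + 2) / 2 := by nlinarith
  have hx2pos : 0 < x ^ 2 := by positivity
  constructor
  · intro r hr har hbr
    have hR27 : (27:ℝ) ≤ (3:ℝ) ^ r := by
      calc (27:ℝ) = 3 ^ 3 := by norm_num
      _ ≤ 3 ^ r := pow_le_pow_right₀ (by norm_num) hr
    have hs : Real.sqrt (8 * 3 ^ r + 1) ^ 2 = 8 * (3:ℝ) ^ r + 1 :=
      Real.sq_sqrt (by positivity)
    obtain ⟨h1, h2, h3, h4, h5⟩ := case1_bounds x (a r) ((3:ℝ) ^ r)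
      (Real.sqrt (8 * 3 ^ r + 1)) hR27 (asq r) (Real.rpow_nonneg (by norm_num) _)
      hs (Real.sqrt_nonneg _) har hbr
    have hrpr : (3:ℝ) ^ ((r:ℤ):ℝ) = (3:ℝ) ^ r := by
      push_cast; rw [Real.rpow_natCast]
    have hrpr1 : (3:ℝ) ^ (((r:ℤ):ℝ) + 1) = 3 * (3:ℝ) ^ r := by
      rw [Real.rpow_add (by norm_num), hrpr, Real.rpow_one]; ring
    have hrprm : (3:ℝ) ^ ((((r:ℤ) - 1):ℤ):ℝ) = (3:ℝ) ^ r / 3 := by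
      push_cast
      rw [Real.rpow_sub (by norm_num), Real.rpow_one, Real.rpow_natCast]
    have hf1 : ⌊f₁ x⌋ = (r:ℤ) := floor_logb3 _ _ hx2pos (by rw [hrpr]; exact h1)
      (by rw [hrpr1]; exact h2)
    have hf2 : ⌊f₂ x⌋ = (r:ℤ) - 1 := floor_logb3 _ _ hypos (by rw [hrprm]; exact h3)
      (by rw [show ((((r:ℤ) - 1):ℤ):ℝ) + 1 = ((r:ℤ):ℝ) by push_cast; ring, hrpr]; exact h4)
    rw [Int.fract, Int.fract, hf1, hf2]
    have key : f₁ x < f₂ x + 1 := by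
      have ha1 : f₁ x < Real.logb 3 (3 * ((x + 1) * (x + 2) / 2)) := by
        apply Real.logb_lt_logb hb3 hx2pos
        nlinarith
      have ha2 : Real.logb 3 (3 * ((x + 1) * (x + 2) / 2)) = 1 + f₂ x := by
        rw [f₂, Real.logb_mul (by norm_num) (ne_of_gt hypos), Real.logb_self_eq_one] <;> norm_num
      linarith
    push_cast
    linarith
  · intro r hr hbr har
    have hR27 : (27:ℝ) ≤ (3:ℝ) ^ r := by
      calc (27:ℝ) = 3 ^ 3 := by norm_num
      _ ≤ 3 ^ r := pow_le_pow_right₀ (by norm_num) hr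
    have hs : Real.sqrt (8 * 3 ^ r + 1) ^ 2 = 8 * (3:ℝ) ^ r + 1 :=
      Real.sq_sqrt (by positivity)
    have hA2 : (a (r+1)) ^ 2 = 3 * (3:ℝ) ^ r := by rw [asq (r+1)]; ring
    have hA9 : (9:ℝ) ≤ a (r+1) := by
      have h2le : (3:ℝ) ^ (2:ℝ) ≤ (3:ℝ) ^ ((((r:ℕ)+1):ℝ)/2) := by
        apply Real.rpow_le_rpow_of_exponent_le (by norm_num)
        have : (3:ℝ) ≤ (r:ℝ) := by exact_mod_cast hr
        linarith
      calc (9:ℝ) = (3:ℝ) ^ (2:ℝ) := by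
            rw [show (2:ℝ) = ((2:ℕ):ℝ) by norm_num, Real.rpow_natCast]; norm_num
      _ ≤ a (r+1) := by rw [a]; push_cast at h2le ⊢; exact h2le
    obtain ⟨h1, h2, h3, h4, h5⟩ := case2_bounds x (a (r+1)) ((3:ℝ) ^ r)
      (Real.sqrt (8 * 3 ^ r + 1)) hR27 hA2 hA9 hs (Real.sqrt_nonneg _) hbr har
    have hrpr : (3:ℝ) ^ ((r:ℤ):ℝ) = (3:ℝ) ^ r := by
      push_cast; rw [Real.rpow_natCast]
    have hrpr1 : (3:ℝ) ^ (((r:ℤ):ℝ) + 1) = 3 * (3:ℝ) ^ r := by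
      rw [Real.rpow_add (by norm_num), hrpr, Real.rpow_one]; ring
    have hf1 : ⌊f₁ x⌋ = (r:ℤ) := floor_logb3 _ _ hx2pos (by rw [hrpr]; exact h1)
      (by rw [hrpr1]; exact h2)
    have hf2 : ⌊f₂ x⌋ = (r:ℤ) := floor_logb3 _ _ hypos (by rw [hrpr]; exact h3)
      (by rw [hrpr1]; exact h4)
    rw [Int.fract, Int.fract, hf1, hf2]
    have key : f₂ x ≤ f₁ x := Real.logb_le_logb_of_le hb3 hypos h5
    linarith
end

section
/- For every integer q ≥ 2, the equation q^(x−1) = (x+1)(x/2+1)⋯(x/(q−1)+1) (product over i = 1, …, q−1 of (x/i + 1)) has a unique real solution x₀ in [1, ∞). Moreover, x₀ > 1, and if q > 3 then x₀ < q. -/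
/-!
Taking logarithms, the equation reads `logGap q x = 0` with
`logGap q x = (x - 1) log q - ∑ log (x / i + 1)`, a convex function of `x > 0`. Since the product
`∏ (n / i + 1)` over `i ≤ k` is `(n + k).choose k`, we get `logGap q 1 = -log q < 0`; also
`logGap q (3q) > 0`, so a root `x₀ > 1` exists. A convex function that is negative at `1` changes
sign at most once on `[1, ∞)`, which gives uniqueness, and `x₀ < q` for `q ≥ 4` because
`logGap q q > 0`, i.e. `(2q - 1).choose (q - 1) ≤ 4 ^ (q - 1) < q ^ (q - 1)`.
-/

open Finset Real

theorem ConvexOn.le_of_apply_nonpos {s : Set ℝ} {f : ℝ → ℝ} (hf : ConvexOn ℝ s f) {a y z : ℝ}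
    (ha : a ∈ s) (hy : y ∈ s) (haz : a ≤ z) (hfa : f a < 0) (hfz : 0 ≤ f z) (hfy : f y ≤ 0) :
    y ≤ z := by
  by_contra! hzy
  have haz' : a < z := haz.lt_of_ne (by rintro rfl; linarith)
  have hz : z ∈ openSegment ℝ a y := by
    rw [openSegment_eq_Ioo (haz'.trans hzy)]
    exact ⟨haz', hzy⟩
  have := hf.lt_right_of_left_lt ha hy hz (by linarith)
  linarith

theorem prod_div_add_one_eq_choose (n k : ℕ) :
    ∏ i ∈ Icc 1 k, ((n : ℝ) / i + 1) = (n + k).choose k := by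
  induction k with
  | zero => simp
  | succ k ih =>
    have h : ((n + k + 1 : ℕ) : ℝ) * (n + k).choose k =
        (n + k + 1).choose (k + 1) * (k + 1 : ℕ) := by
      exact_mod_cast Nat.add_one_mul_choose_eq (n + k) k
    rw [prod_Icc_succ_top (by omega), ih, ← add_assoc]
    push_cast at h ⊢
    field_simp
    linarith

noncomputable def logGap (q : ℕ) (x : ℝ) : ℝ :=
  (x - 1) * log q - ∑ i ∈ Icc 1 (q - 1), log (x / i + 1)

theorem concaveOn_log_div_add_one {c : ℝ} (hc : 0 < c) :
    ConcaveOn ℝ (Set.Ioi 0) fun x => log (x / c + 1) := by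
  refine ⟨convex_Ioi 0, fun x hx y hy a b ha hb hab => ?_⟩
  have hpos : ∀ z : ℝ, z ∈ Set.Ioi 0 → z / c + 1 ∈ Set.Ioi 0 := fun z hz => by
    simp only [Set.mem_Ioi] at hz ⊢; positivity
  convert strictConcaveOn_log_Ioi.concaveOn.2 (hpos x hx) (hpos y hy) ha hb hab using 2
  simp only [smul_eq_mul]
  linear_combination (-1 : ℝ) * hab

theorem convexOn_logGap (q : ℕ) : ConvexOn ℝ (Set.Ioi 0) (logGap q) := by
  have hlin : ConvexOn ℝ (Set.Ioi 0) fun x : ℝ => (x - 1) * log q :=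
    ⟨convex_Ioi 0, fun x _ y _ a b _ _ hab => le_of_eq (by
      simp only [smul_eq_mul]; linear_combination (log q) * hab)⟩
  have hsum : ConcaveOn ℝ (Set.Ioi 0) fun x => ∑ i ∈ Icc 1 (q - 1), log (x / i + 1) := by
    have := sum_induction (fun i x => log (x / (i : ℝ) + 1)) (ConcaveOn ℝ (Set.Ioi 0))
      (fun _ _ => ConcaveOn.add) (concaveOn_const 0 (convex_Ioi 0))
      (fun i hi => concaveOn_log_div_add_one (by simp at hi ⊢; omega)) (s := Icc 1 (q - 1))
    simpa only [sum_fn] using this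
  exact hlin.sub hsum

theorem logGap_eq {x : ℝ} (hx : 0 ≤ x) (q : ℕ) :
    logGap q x = (x - 1) * log q - log (∏ i ∈ Icc 1 (q - 1), (x / i + 1)) := by
  rw [logGap, log_prod fun _ _ => by positivity]

theorem logGap_eq_zero_iff {q : ℕ} (hq : 0 < q) {x : ℝ} (hx : 0 ≤ x) :
    logGap q x = 0 ↔ (q : ℝ) ^ (x - 1) = ∏ i ∈ Icc 1 (q - 1), (x / i + 1) := by
  rw [logGap_eq hx, sub_eq_zero, ← log_rpow (by positivity)]
  exact log_injOn_pos.eq_iff (rpow_pos_of_pos (by positivity) _)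
    (Set.mem_Ioi.mpr (prod_pos fun _ _ => by positivity))

theorem logGap_one {q : ℕ} (hq : 0 < q) : logGap q 1 = -log q := by
  have h := prod_div_add_one_eq_choose 1 (q - 1)
  rw [← Nat.choose_symm_add, Nat.choose_one_right, Nat.add_sub_cancel' hq, Nat.cast_one] at h
  rw [logGap_eq zero_le_one, h]
  ring

theorem logGap_three_mul_pos {q : ℕ} (hq : 2 ≤ q) : 0 < logGap q (3 * q) := by
  have hq' : (2 : ℝ) ≤ q := by exact_mod_cast hq
  have hterm : ∀ i ∈ Icc 1 (q - 1), log (3 * q / i + 1) ≤ 3 * log q := fun i hi => by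
    have hi : (1 : ℝ) ≤ i := by exact_mod_cast (mem_Icc.mp hi).1
    calc log (3 * q / i + 1) ≤ log ((q : ℝ) ^ 3) := by
          gcongr
          calc 3 * (q : ℝ) / i + 1 ≤ 3 * q + 1 := by gcongr; exact div_le_self (by positivity) hi
            _ ≤ (q : ℝ) ^ 3 := by nlinarith [mul_le_mul hq' hq' (by norm_num) (by positivity)]
      _ = 3 * log q := by rw [log_pow]; norm_num
  have hsum := sum_le_card_nsmul _ _ _ hterm
  rw [Nat.card_Icc, Nat.add_sub_cancel, nsmul_eq_mul, Nat.cast_sub (by omega), Nat.cast_one] at hsum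
  have hlog : 0 < log q := log_pos (by linarith)
  rw [logGap]
  nlinarith

theorem choose_two_mul_sub_one_lt_pow {q : ℕ} (hq : 4 ≤ q) :
    (2 * q - 1).choose (q - 1) < q ^ (q - 1) := by
  obtain rfl | hq := hq.eq_or_lt
  · decide
  calc (2 * q - 1).choose (q - 1) = (2 * (q - 1) + 1).choose (q - 1) := by congr 1; omega
    _ ≤ 4 ^ (q - 1) := Nat.choose_middle_le_pow _
    _ < q ^ (q - 1) := Nat.pow_lt_pow_left hq (by omega)

theorem logGap_self_pos {q : ℕ} (hq : 4 ≤ q) : 0 < logGap q q := by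
  have h := prod_div_add_one_eq_choose q (q - 1)
  rw [show q + (q - 1) = 2 * q - 1 by omega] at h
  rw [logGap_eq (Nat.cast_nonneg q), h, sub_pos, ← Nat.cast_pred (by omega), ← log_pow]
  exact log_lt_log (by exact_mod_cast Nat.choose_pos (by omega))
    (by exact_mod_cast choose_two_mul_sub_one_lt_pow hq)

open Finset in
theorem stmt_8 (q : ℕ) (hq : 2 ≤ q) :
    ∃ x₀ : ℝ,
      (1 ≤ x₀ ∧ (q : ℝ) ^ (x₀ - 1) = ∏ i ∈ Icc 1 (q - 1), (x₀ / (i : ℝ) + 1)) ∧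
      (∀ x : ℝ, 1 ≤ x → (q : ℝ) ^ (x - 1) = ∏ i ∈ Icc 1 (q - 1), (x / (i : ℝ) + 1) → x = x₀) ∧
      1 < x₀ ∧ (3 < q → x₀ < (q : ℝ)) := by
  have hq0 : 0 < q := by omega
  have hf1 : logGap q 1 < 0 := by
    rw [logGap_one hq0, neg_lt_zero]
    exact log_pos (by exact_mod_cast hq)
  have hroot_le : ∀ y z : ℝ, 1 ≤ y → 1 ≤ z → logGap q y ≤ 0 → 0 ≤ logGap q z → y ≤ z :=
    fun y z hy hz hfy hfz => (convexOn_logGap q).le_of_apply_nonpos (Set.mem_Ioi.mpr one_pos)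
      (Set.mem_Ioi.mpr (by linarith)) hz hf1 hfz hfy
  obtain ⟨x₀, hx₀, hroot⟩ := intermediate_value_Icc (by norm_cast; omega)
    ((convexOn_logGap q).continuousOn isOpen_Ioi |>.mono fun x hx => lt_of_lt_of_le one_pos hx.1)
    ⟨hf1.le, (logGap_three_mul_pos hq).le⟩
  have hx₀1 : 1 ≤ x₀ := hx₀.1
  refine ⟨x₀, ⟨hx₀1, (logGap_eq_zero_iff hq0 (by linarith)).mp hroot⟩, fun x hx hxeq => ?_,
    hx₀1.lt_of_ne (by rintro rfl; linarith), fun h3 => ?_⟩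
  · have hxroot := (logGap_eq_zero_iff hq0 (by linarith)).mpr hxeq
    exact le_antisymm (hroot_le x x₀ hx hx₀1 hxroot.le hroot.ge)
      (hroot_le x₀ x hx₀1 hx hroot.le hxroot.ge)
  · have hfq := logGap_self_pos h3
    exact (hroot_le x₀ q hx₀1 (by exact_mod_cast hq0) hroot.le hfq.le).lt_of_ne
      (by rintro rfl; linarith)
end

section
/- Let q ≥ 2 be an integer and let x₀ = x₀(q) be the unique real solution in [1, ∞) of q^(x−1) = ∏_{i=1}^{q−1}(x/i + 1). Then for every real x ≥ 1, q^(x−1) < ∏_{i=1}^{q−1}(x/i + 1) if and only if x < x₀. In particular, for every integer n ≥ 1, q^(n−1) < binom(n+q−1, q−1) if and only if n < x₀. -/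
open Finset

lemma aux_prod (n m : ℕ) : ∏ i ∈ Icc 1 m, ((n:ℝ)/(i:ℝ) + 1) = ((n+m).choose m : ℝ) := by
  induction m with
  | zero => simp
  | succ m ih =>
    rw [Finset.prod_Icc_succ_top (Nat.le_add_left 1 m), ih]
    have h := Nat.add_one_mul_choose_eq (n+m) m
    have hm : ((m:ℝ)+1) ≠ 0 := by positivity
    have h' : ((n+m+1 : ℕ):ℝ) * ((n+m).choose m : ℝ) = ((n+m+1).choose (m+1) : ℝ) * ((m:ℝ)+1) := by
      exact_mod_cast congrArg (Nat.cast : ℕ → ℝ) h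
    have hmm : n + (m+1) = n + m + 1 := by omega
    rw [hmm]
    push_cast at h' ⊢
    field_simp
    linarith [h']

open Finset in
theorem stmt_9 (q : ℕ) (hq : 2 ≤ q) (x₀ : ℝ) (hx₀ : 1 ≤ x₀)
    (heq : (q : ℝ) ^ (x₀ - 1) = ∏ i ∈ Icc 1 (q - 1), (x₀ / (i : ℝ) + 1))
    (huniq : ∀ x : ℝ, 1 ≤ x →
      (q : ℝ) ^ (x - 1) = ∏ i ∈ Icc 1 (q - 1), (x / (i : ℝ) + 1) → x = x₀) :
    (∀ x : ℝ, 1 ≤ x →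
      ((q : ℝ) ^ (x - 1) < ∏ i ∈ Icc 1 (q - 1), (x / (i : ℝ) + 1) ↔ x < x₀)) ∧
    (∀ n : ℕ, 1 ≤ n →
      (q ^ (n - 1) < Nat.choose (n + q - 1) (q - 1) ↔ (n : ℝ) < x₀)) := by
  have hq0 : (0:ℝ) < q := by positivity
  have hq1 : (1:ℝ) < q := by exact_mod_cast hq
  set P : ℝ → ℝ := fun x => ∏ i ∈ Icc 1 (q - 1), (x / (i : ℝ) + 1) with hP
  set f : ℝ → ℝ := fun x => (q:ℝ) ^ (x - 1) - P x with hf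
  have hfzero : ∀ x, 1 ≤ x → f x = 0 → x = x₀ := by
    intro x hx h0
    exact huniq x hx (by simpa [hf, sub_eq_zero] using h0)
  have hcont : Continuous f := by
    apply Continuous.sub
    · have h1 : Continuous (fun y : ℝ => (q:ℝ) ^ y) :=
        continuous_iff_continuousAt.2 fun y => Real.continuousAt_const_rpow (ne_of_gt hq0)
      exact h1.comp (continuous_id.sub continuous_const)
    · exact continuous_finset_prod _ fun i _ => ((continuous_id.div_const _).add continuous_const)
  have hP1 : P 1 = q := by
    have h := aux_prod 1 (q-1)
    have h1 : 1 + (q-1) = q := by omega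
    rw [h1] at h
    have h2 : q.choose (q-1) = q := by
      rw [← Nat.choose_symm (Nat.sub_le q 1), show q - (q-1) = 1 by omega, Nat.choose_one_right]
    simp only [hP]
    push_cast at h ⊢
    rw [h]
    exact_mod_cast congrArg (Nat.cast : ℕ → ℝ) h2
  have hf1 : f 1 < 0 := by
    simp only [hf, sub_self, Real.rpow_zero, hP1]
    linarith
  have hx₀1 : 1 < x₀ := by
    rcases lt_or_eq_of_le hx₀ with h | h
    · exact h
    · exfalso
      have h0 : f x₀ = 0 := by
        simp only [hf, sub_eq_zero]; exact heq
      rw [← h] at h0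
      linarith
  -- a large point where f is positive
  have hbig : ∃ b : ℝ, x₀ < b ∧ 0 < f b := by
    have ht := tendsto_pow_const_div_const_pow_of_one_lt (q-1) hq1
    have hc : (0:ℝ) < ((q:ℝ)^2)⁻¹ := by positivity
    obtain ⟨K, hK⟩ := Filter.eventually_atTop.1 (ht.eventually_lt_const hc)
    obtain ⟨M, hM⟩ := exists_nat_gt x₀
    set m : ℕ := max (M + 1) K with hm
    have hm1 : 1 ≤ m := le_trans (by omega) (le_max_left _ _)
    have hmx : x₀ < (m:ℝ) := by
      have : (M:ℝ) < (m:ℝ) := by exact_mod_cast lt_of_lt_of_le (Nat.lt_succ_self M) (le_max_left _ _)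
      linarith
    refine ⟨(m:ℝ), hmx, ?_⟩
    have hineq := hK (m+1) (le_trans (le_max_right _ _) (Nat.le_succ m))
    -- (m+1)^(q-1) < q^(m-1)
    have hsplit : (q:ℝ)^(m+1) = (q:ℝ)^(m-1) * (q:ℝ)^2 := by
      rw [← pow_add]; congr 1; omega
    have hqm : (0:ℝ) < (q:ℝ)^(m+1) := by positivity
    have hlt : (((m+1:ℕ)):ℝ)^(q-1) < (q:ℝ)^(m-1) := by
      rw [div_lt_iff₀ hqm] at hineq
      calc (((m+1:ℕ)):ℝ)^(q-1) < ((q:ℝ)^2)⁻¹ * (q:ℝ)^(m+1) := hineq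
        _ = (q:ℝ)^(m-1) := by rw [hsplit]; field_simp
    have hPb : P m ≤ (((m+1:ℕ)):ℝ)^(q-1) := by
      have := Finset.prod_le_prod (s := (Icc 1 (q-1) : Finset ℕ))
        (f := fun i : ℕ => (m:ℝ)/(i:ℝ) + 1) (g := fun _ => ((m+1:ℕ):ℝ))
        (fun i hi => by
          have hi1 : 1 ≤ i := (Finset.mem_Icc.1 hi).1
          have : (0:ℝ) < i := by exact_mod_cast hi1
          positivity)
        (fun i hi => by
          have hi1 : (1:ℝ) ≤ i := by exact_mod_cast (Finset.mem_Icc.1 hi).1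
          have h0 : (0:ℝ) ≤ (m:ℝ) := by positivity
          have : (m:ℝ)/(i:ℝ) ≤ m := by
            rw [div_le_iff₀ (by linarith)]
            nlinarith
          push_cast
          linarith)
      simpa [Nat.card_Icc] using this
    have hrpow : (q:ℝ) ^ ((m:ℝ) - 1) = (q:ℝ)^(m-1 : ℕ) := by
      rw [show (m:ℝ) - 1 = ((m-1:ℕ):ℝ) by push_cast [Nat.cast_sub hm1]; ring,
        Real.rpow_natCast]
    simp only [hf]
    rw [hrpow]
    linarith
  obtain ⟨b, hbx, hbpos⟩ := hbig
  have hb1 : 1 ≤ b := le_trans hx₀ hbx.le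
  -- sign on [1, x₀)
  have hneg : ∀ x, 1 ≤ x → x < x₀ → f x < 0 := by
    intro x hx hlt
    by_contra hge
    push_neg at hge
    rcases eq_or_lt_of_le hge with h | h
    · exact absurd (hfzero x hx h.symm) (ne_of_lt hlt)
    · obtain ⟨c, hc, hfc⟩ := intermediate_value_Icc hx hcont.continuousOn
        (Set.mem_Icc.2 ⟨hf1.le, h.le⟩)
      have := hfzero c hc.1 hfc
      linarith [hc.2, this ▸ hc.2]
  -- sign on (x₀, ∞)
  have hpos : ∀ x, x₀ < x → 0 < f x := by
    intro x hlt
    have hx1 : 1 ≤ x := le_trans hx₀ hlt.le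
    by_contra hle
    push_neg at hle
    rcases eq_or_lt_of_le hle with h | h
    · exact absurd (hfzero x hx1 h) (ne_of_gt hlt)
    · rcases le_total x b with hxb | hbx'
      · obtain ⟨c, hc, hfc⟩ := intermediate_value_Icc hxb hcont.continuousOn
          (Set.mem_Icc.2 ⟨h.le, hbpos.le⟩)
        have hceq := hfzero c (le_trans hx1 hc.1) hfc
        linarith [hc.1, hceq ▸ hc.1]
      · obtain ⟨c, hc, hfc⟩ := intermediate_value_Icc' hbx' hcont.continuousOn
          (Set.mem_Icc.2 ⟨h.le, hbpos.le⟩)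
        have hceq := hfzero c (le_trans hb1 hc.1) hfc
        linarith [hc.1, hceq ▸ hc.1]
  have part1 : ∀ x : ℝ, 1 ≤ x →
      ((q : ℝ) ^ (x - 1) < ∏ i ∈ Icc 1 (q - 1), (x / (i : ℝ) + 1) ↔ x < x₀) := by
    intro x hx
    constructor
    · intro hlt
      have hfx : f x < 0 := by simp only [hf]; linarith
      rcases lt_trichotomy x x₀ with h | h | h
      · exact h
      · exfalso; have : f x₀ = 0 := by simp only [hf, sub_eq_zero]; exact heq
        rw [h] at hfx; linarith
      · exact absurd (hpos x h) (by linarith)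
    · intro h
      have := hneg x hx h
      simp only [hf] at this
      linarith
  refine ⟨part1, ?_⟩
  intro n hn
  have hn1 : (1:ℝ) ≤ (n:ℝ) := by exact_mod_cast hn
  have key := part1 (n:ℝ) hn1
  have hprod : ∏ i ∈ Icc 1 (q - 1), ((n:ℝ) / (i : ℝ) + 1) = ((n + q - 1).choose (q-1) : ℝ) := by
    rw [aux_prod n (q-1), show n + (q-1) = n + q - 1 by omega]
  have hrpow : (q:ℝ) ^ ((n:ℝ) - 1) = ((q ^ (n-1) : ℕ) : ℝ) := by
    rw [show (n:ℝ) - 1 = ((n-1:ℕ):ℝ) by push_cast [Nat.cast_sub hn]; ring,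
      Real.rpow_natCast]
    push_cast
    ring
  rw [hprod, hrpow] at key
  rw [← key]
  exact_mod_cast Nat.cast_lt (α := ℝ)
end

section
/- Let q be an integer with q ≥ e^(e²) and set b = ⌊ln(ln q)⌋ (so b ≥ 2). Then q^(b−1) < binom(b + q − 1, q − 1). -/
lemma aux_log_le_half {t : ℝ} (ht : 0 < t) : Real.log t ≤ t / 2 := by
  have hs : (0:ℝ) < Real.sqrt t := Real.sqrt_pos.mpr ht
  have h1 : Real.log (Real.sqrt t) = Real.log t / 2 := Real.log_sqrt ht.le
  have h2 : Real.log (Real.sqrt t) ≤ Real.sqrt t - 1 :=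
    Real.log_le_sub_one_of_pos hs
  have h3 : Real.sqrt t ^ 2 = t := Real.sq_sqrt ht.le
  nlinarith [sq_nonneg (Real.sqrt t - 2)]

theorem stmt_14 (q : ℕ) (hq : Real.exp (Real.exp 2) ≤ (q : ℝ)) (b : ℕ)
    (hb : (b : ℤ) = ⌊Real.log (Real.log q)⌋) :
    2 ≤ b ∧ q ^ (b - 1) < Nat.choose (b + q - 1) (q - 1) := by
  have hq0 : (0:ℝ) < q := lt_of_lt_of_le (Real.exp_pos _) hq
  have hq1 : 1 ≤ q := by exact_mod_cast Nat.cast_pos.mp hq0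
  have hL : Real.exp 2 ≤ Real.log q := by
    have := Real.log_le_log (Real.exp_pos _) hq
    rwa [Real.log_exp] at this
  have hL0 : (0:ℝ) < Real.log q := lt_of_lt_of_le (Real.exp_pos _) hL
  set t := Real.log (Real.log q) with htdef
  have ht2 : (2:ℝ) ≤ t := by
    have := Real.log_le_log (Real.exp_pos _) hL
    rwa [Real.log_exp] at this
  have ht0 : (0:ℝ) < t := by linarith
  -- b ≥ 2
  have hb2 : 2 ≤ b := by
    have h1 : (2:ℤ) ≤ ⌊t⌋ := Int.le_floor.mpr (by exact_mod_cast ht2)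
    rw [← hb] at h1
    exact_mod_cast h1
  -- b ≤ t
  have hbt : (b:ℝ) ≤ t := by
    have := Int.floor_le t
    rw [← hb] at this
    exact_mod_cast this
  have hb0 : (0:ℝ) < b := by exact_mod_cast (by omega : 0 < b)
  -- key: b * log b ≤ log q
  have hkey : (b:ℝ) * Real.log b ≤ Real.log q := by
    have hlogb : Real.log b ≤ Real.log t := Real.log_le_log hb0 hbt
    have hlogt : Real.log t ≤ t / 2 := aux_log_le_half ht0
    have hlogb0 : 0 ≤ Real.log b := Real.log_nonneg (by exact_mod_cast Nat.one_le_iff_ne_zero.mpr (by omega))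
    have h1 : (b:ℝ) * Real.log b ≤ t * (t / 2) := by
      apply mul_le_mul hbt (hlogb.trans hlogt) hlogb0 ht0.le
    have h2 : Real.exp (2 * Real.log t) ≤ Real.exp t := by
      apply Real.exp_le_exp.mpr
      linarith
    have h3 : Real.exp (2 * Real.log t) = t ^ 2 := by
      rw [mul_comm, Real.exp_mul, Real.exp_log ht0]
      norm_num
    have h4 : Real.exp t = Real.log q := Real.exp_log hL0
    nlinarith
  -- b ^ b ≤ q over ℕ
  have hpow : b ^ b ≤ q := by
    have h1 : Real.log ((b:ℝ) ^ b) = (b:ℝ) * Real.log b := by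
      rw [Real.log_pow]
    have h2 : ((b:ℝ) ^ b) ≤ (q:ℝ) := by
      have hp : (0:ℝ) < (b:ℝ) ^ b := pow_pos hb0 _
      calc ((b:ℝ) ^ b) = Real.exp (Real.log ((b:ℝ) ^ b)) := (Real.exp_log hp).symm
        _ ≤ Real.exp (Real.log q) := by rw [h1]; exact Real.exp_le_exp.mpr hkey
        _ = q := Real.exp_log hq0
    exact_mod_cast h2
  have hfac : Nat.factorial b ≤ q := (Nat.factorial_le_pow b).trans hpow
  refine ⟨hb2, ?_⟩
  have hsym : Nat.choose (b + q - 1) (q - 1) = Nat.choose (b + q - 1) b := by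
    have h := Nat.choose_symm (show b ≤ b + q - 1 by omega)
    rw [show b + q - 1 - b = q - 1 by omega] at h
    exact h
  rw [hsym]
  have hd : q ^ b < Nat.descFactorial (b + q - 1) b := by
    have h := Nat.pow_sub_lt_descFactorial (n := b + q - 1) hb2 (show b ≤ b + q - 1 by omega)
    rwa [show b + q - 1 + 1 - b = q by omega] at h
  rw [Nat.descFactorial_eq_factorial_mul_choose] at hd
  have h5 : q * q ^ (b - 1) < q * Nat.choose (b + q - 1) b := by
    calc q * q ^ (b - 1) = q ^ b := by
          rw [← pow_succ']
          congr 1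
          omega
      _ < Nat.factorial b * Nat.choose (b + q - 1) b := hd
      _ ≤ q * Nat.choose (b + q - 1) b := Nat.mul_le_mul_right _ hfac
  exact Nat.lt_of_mul_lt_mul_left h5
end

section
/- Let q ≥ 2 be an integer and let x₀ = x₀(q) be the unique real solution in [1, ∞) of q^(x−1) = ∏_{i=1}^{q−1}(x/i + 1). Then x₀ > ⌊ln(ln q)⌋; consequently χ_q ≥ ⌊ln(ln q)⌋, where χ_q = x₀ − 1 if x₀ ∈ ℕ and χ_q = ⌊x₀⌋ otherwise. -/
/-!
Taking logarithms, `(x₀ - 1) log q = ∑_{i < q} log (1 + x₀/i)`, and each term is at least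
`x₀ / (x₀ + i) ≥ x₀ (log (x₀ + i + 1) - log (x₀ + i))`. Telescoping gives
`(x₀ - 1) log q ≥ x₀ (log (x₀ + q) - log (x₀ + 1))`, hence `log q ≤ x₀ log (x₀ + 1) ≤ x₀²`.
If `x₀ ≤ log log q`, then `x₀² < exp x₀ ≤ log q`, a contradiction; so in fact `log log q < x₀`.
-/

open Finset Real

theorem sq_lt_exp {x : ℝ} (hx : 0 ≤ x) : x ^ 2 < exp x := by
  have hhalf : x < exp (x / 2) := by
    nlinarith [quadratic_le_exp_of_nonneg (div_nonneg hx zero_le_two)]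
  calc x ^ 2 < exp (x / 2) ^ 2 := pow_lt_pow_left₀ hhalf hx two_ne_zero
    _ = exp x := by rw [← exp_nat_mul]; ring_nf

theorem mul_log_add_one_sub_log_le_log_div_add_one {x y : ℝ} (hx : 0 ≤ x) (hy : 0 < y) :
    x * (log (x + y + 1) - log (x + y)) ≤ log (x / y + 1) := by
  have hxy : 0 < x + y := by linarith
  have hupper : log (x + y + 1) - log (x + y) ≤ 1 / (x + y) := by
    rw [← log_div (by linarith) hxy.ne']
    have := log_le_sub_one_of_pos (x := (x + y + 1) / (x + y)) (by positivity)
    have hsimp : (x + y + 1) / (x + y) - 1 = 1 / (x + y) := by field_simp; ring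
    linarith
  have hlower : x / (x + y) ≤ log (x / y + 1) := by
    have := one_sub_inv_le_log_of_pos (x := x / y + 1) (by positivity)
    have hsimp : 1 - (x / y + 1)⁻¹ = x / (x + y) := by field_simp; ring
    linarith
  calc x * (log (x + y + 1) - log (x + y)) ≤ x * (1 / (x + y)) :=
        mul_le_mul_of_nonneg_left hupper hx
    _ = x / (x + y) := by ring
    _ ≤ log (x / y + 1) := hlower

theorem mul_log_sub_le_sum_log_div_add_one {x : ℝ} (hx : 0 ≤ x) (n : ℕ) :
    x * (log (x + n + 1) - log (x + 1)) ≤ ∑ i ∈ Icc 1 n, log (x / i + 1) := by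
  induction n with
  | zero => simp
  | succ n ih =>
    rw [sum_Icc_succ_top (by omega)]
    have hstep := mul_log_add_one_sub_log_le_log_div_add_one hx (y := ((n + 1 : ℕ) : ℝ))
      (by positivity)
    push_cast at hstep ⊢
    have hsplit : x * (log (x + (n + 1) + 1) - log (x + 1))
        = x * (log (x + n + 1) - log (x + 1)) + x * (log (x + (n + 1) + 1) - log (x + (n + 1)))
        := by ring_nf
    linarith

theorem log_le_mul_log_add_one_of_rpow_eq_prod {q : ℕ} (hq : 0 < q) {x : ℝ} (hx : 0 ≤ x)
    (heq : (q : ℝ) ^ (x - 1) = ∏ i ∈ Icc 1 (q - 1), (x / (i : ℝ) + 1)) :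
    log q ≤ x * log (x + 1) := by
  have hq' : (0 : ℝ) < q := by exact_mod_cast hq
  have hlog : (x - 1) * log q = ∑ i ∈ Icc 1 (q - 1), log (x / i + 1) := by
    rw [← log_rpow hq', heq, log_prod]
    intro i hi
    have : (1 : ℝ) ≤ i := by exact_mod_cast (mem_Icc.mp hi).1
    positivity
  have htel := mul_log_sub_le_sum_log_div_add_one hx (q - 1)
  have hcast : x + ((q - 1 : ℕ) : ℝ) + 1 = x + q := by
    rw [Nat.cast_sub (by omega)]; push_cast; ring
  rw [hcast] at htel
  have hmono : log q ≤ log (x + q) := log_le_log hq' (by linarith)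
  nlinarith

theorem log_log_lt_of_rpow_eq_prod {q : ℕ} {x : ℝ} (hx : 1 ≤ x)
    (heq : (q : ℝ) ^ (x - 1) = ∏ i ∈ Icc 1 (q - 1), (x / (i : ℝ) + 1)) :
    log (log q) < x := by
  by_contra! hle
  have hlogq : 0 < log q := by
    refine (log_natCast_nonneg q).lt_of_ne' fun h => ?_
    rw [h, log_zero] at hle
    linarith
  have hq : 0 < q := Nat.pos_of_ne_zero fun h => by simp [h] at hlogq
  have hlog1 : log (x + 1) ≤ x := by linarith [log_le_sub_one_of_pos (x := x + 1) (by linarith)]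
  refine lt_irrefl (log (q : ℝ)) ?_
  calc log q ≤ x * log (x + 1) := log_le_mul_log_add_one_of_rpow_eq_prod hq (by linarith) heq
    _ ≤ x ^ 2 := by rw [sq]; exact mul_le_mul_of_nonneg_left hlog1 (by linarith)
    _ < exp x := sq_lt_exp (by linarith)
    _ ≤ exp (log (log q)) := exp_le_exp.mpr hle
    _ = log q := exp_log hlogq

open Finset in
theorem stmt_15_general (q : ℕ) (x₀ : ℝ) (hx₀ : 1 ≤ x₀)
    (heq : (q : ℝ) ^ (x₀ - 1) = ∏ i ∈ Icc 1 (q - 1), (x₀ / (i : ℝ) + 1))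
    (χ : ℤ)
    (hχ₁ : (∃ m : ℕ, 0 < m ∧ x₀ = (m : ℝ)) → χ = ⌊x₀⌋ - 1)
    (hχ₂ : (¬ ∃ m : ℕ, 0 < m ∧ x₀ = (m : ℝ)) → χ = ⌊x₀⌋) :
    (⌊Real.log (Real.log q)⌋ : ℝ) < x₀ ∧ ⌊Real.log (Real.log q)⌋ ≤ χ := by
  have hlt : (⌊log (log q)⌋ : ℝ) < x₀ :=
    (Int.floor_le _).trans_lt (log_log_lt_of_rpow_eq_prod hx₀ heq)
  refine ⟨hlt, ?_⟩
  by_cases hint : ∃ m : ℕ, 0 < m ∧ x₀ = (m : ℝ)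
  · obtain ⟨m, hm, rfl⟩ := hint
    rw [hχ₁ ⟨m, hm, rfl⟩, Int.floor_natCast]
    have : ⌊log (log q)⌋ < (m : ℤ) := by exact_mod_cast hlt
    omega
  · rw [hχ₂ hint]
    exact Int.le_floor.mpr hlt.le

open Finset in
theorem stmt_15 (q : ℕ) (hq : 2 ≤ q) (x₀ : ℝ) (hx₀ : 1 ≤ x₀)
    (heq : (q : ℝ) ^ (x₀ - 1) = ∏ i ∈ Icc 1 (q - 1), (x₀ / (i : ℝ) + 1))
    (huniq : ∀ x : ℝ, 1 ≤ x →
      (q : ℝ) ^ (x - 1) = ∏ i ∈ Icc 1 (q - 1), (x / (i : ℝ) + 1) → x = x₀)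
    (χ : ℤ)
    (hχ₁ : (∃ m : ℕ, 0 < m ∧ x₀ = (m : ℝ)) → χ = ⌊x₀⌋ - 1)
    (hχ₂ : (¬ ∃ m : ℕ, 0 < m ∧ x₀ = (m : ℝ)) → χ = ⌊x₀⌋) :
    (⌊Real.log (Real.log q)⌋ : ℝ) < x₀ ∧ ⌊Real.log (Real.log q)⌋ ≤ χ :=
  stmt_15_general q x₀ hx₀ heq χ hχ₁ hχ₂
end

section
/- For every integer n ≥ 2 there exists a prime power q such that q^(n−1) < binom(n + q − 1, n); consequently, there exists a finite field 𝔽_q for which the set S(n) of all n elementary symmetric polynomials is a minimal separating set for the symmetric polynomials in n variables over 𝔽_q having the least possible number of elements. -/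
/-- A set `S` of polynomials in `n` variables over `F` is a separating set for the
symmetric polynomials if it consists of symmetric polynomials and whenever two points
`u, v : Fin n → F` are separated by some symmetric polynomial, they are separated by
some element of `S`. -/
def IsSeparatingSet {F : Type*} [CommSemiring F] {n : ℕ}
    (S : Set (MvPolynomial (Fin n) F)) : Prop :=
  (∀ f ∈ S, f.IsSymmetric) ∧
  ∀ u v : Fin n → F,
    (∃ f : MvPolynomial (Fin n) F, f.IsSymmetric ∧
        MvPolynomial.eval u f ≠ MvPolynomial.eval v f) →
    ∃ f ∈ S, MvPolynomial.eval u f ≠ MvPolynomial.eval v f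

/-- `S(n)`, the set of the elementary symmetric polynomials `s_1, …, s_n`
in `n` variables over `F`. -/
def elemSymmSet (F : Type*) [CommSemiring F] (n : ℕ) : Set (MvPolynomial (Fin n) F) :=
  {f | ∃ t : ℕ, 1 ≤ t ∧ t ≤ n ∧ f = MvPolynomial.esymm (Fin n) F t}


/-!
Take `q = 2 ^ n!`. Since `n! < q`, we get `n! q^(n-1) < q^n ≤ q(q+1)⋯(q+n-1) = n! (n+q-1 choose n)`.

Over any commutative ring, a symmetric polynomial is a polynomial in `s_1, …, s_n` by the
fundamental theorem, so `S(n)` separates. Conversely, over a finite domain with `q` elements,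
the values of `s_1, …, s_n` at a point are the coefficients of `∏ (X - u_i)`, so they determine
the multiset of its coordinates. Hence a separating set `T` distinguishes all
`(n+q-1 choose n)` multisets of size `n`, which forces `(n+q-1 choose n) ≤ q^|T|`,
so `q^(n-1) < q^|T|` and `n ≤ |T|`.
-/

open MvPolynomial

theorem Sym.exists_map_univ_val_eq {α : Type*} {n : ℕ} (s : Sym α n) :
    ∃ u : Fin n → α, Finset.univ.val.map u = s := by
  obtain ⟨m, hm⟩ := s
  obtain ⟨l, rfl⟩ : ∃ l : List α, (l : Multiset α) = m := Quot.exists_rep m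
  obtain rfl : l.length = n := hm
  exact ⟨l.get, by rw [Fin.univ_val_map, List.ofFn_get]; rfl⟩

theorem Multiset.eq_of_esymm_eq {R : Type*} [CommRing R] [IsDomain R] {s t : Multiset R}
    (hcard : Multiset.card s = Multiset.card t) (h : ∀ j, s.esymm j = t.esymm j) : s = t := by
  have hprod : (s.map fun r => Polynomial.X - Polynomial.C r).prod
      = (t.map fun r => Polynomial.X - Polynomial.C r).prod := by
    simp only [Multiset.prod_X_sub_X_eq_sum_esymm, hcard, h]
  simpa only [Polynomial.roots_multiset_prod_X_sub_C] using congrArg Polynomial.roots hprod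

theorem MvPolynomial.eval_esymm {R σ : Type*} [CommSemiring R] [Fintype σ] (u : σ → R) (t : ℕ) :
    eval u (esymm σ R t) = (Finset.univ.val.map u).esymm t := by
  rw [← aeval_eq_eval, aeval_esymm_eq_multiset_esymm]

theorem MvPolynomial.IsSymmetric.eval_eq_of_eval_esymm_eq {R : Type*} [CommRing R] {n : ℕ}
    {f : MvPolynomial (Fin n) R} (hf : f.IsSymmetric) {u v : Fin n → R}
    (h : ∀ i : Fin n, eval u (esymm (Fin n) R (i + 1)) = eval v (esymm (Fin n) R (i + 1))) :
    eval u f = eval v f := by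
  obtain ⟨p, hp⟩ := esymmAlgHom_fin_surjective R le_rfl ⟨f, hf⟩
  have hf_eq : f = aeval (fun i : Fin n ↦ esymm (Fin n) R (i + 1)) p := by
    rw [← esymmAlgHom_apply, hp]
  rw [hf_eq, ← aeval_eq_eval, ← aeval_eq_eval, aeval_eq_bind₁, aeval_bind₁, aeval_bind₁]
  simp only [aeval_eq_eval, h]

theorem Nat.pow_pred_lt_choose_of_factorial_lt {n q : ℕ} (hn : 1 ≤ n) (hq : n.factorial < q) :
    q ^ (n - 1) < (n + q - 1).choose n := by
  have hpow : n.factorial * q ^ (n - 1) < q ^ n := by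
    calc n.factorial * q ^ (n - 1) < q * q ^ (n - 1) :=
          Nat.mul_lt_mul_of_pos_right hq (pow_pos (by omega) _)
      _ = q ^ n := by rw [← pow_succ']; congr 1; omega
  have hasc : q ^ n ≤ n.factorial * (n + q - 1).choose n := by
    rw [show n + q - 1 = q + n - 1 by omega, ← Nat.ascFactorial_eq_factorial_mul_choose']
    exact Nat.pow_succ_le_ascFactorial q n
  exact Nat.lt_of_mul_lt_mul_left (hpow.trans_le hasc)

theorem isSeparatingSet_elemSymmSet (F : Type*) [CommRing F] (n : ℕ) :
    IsSeparatingSet (elemSymmSet F n) := by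
  refine ⟨fun f ⟨t, _, _, hf⟩ ↦ hf ▸ esymm_isSymmetric _ _ _, fun u v ⟨f, hf, hne⟩ ↦ ?_⟩
  by_contra! hS
  exact hne (hf.eval_eq_of_eval_esymm_eq fun i ↦ hS _ ⟨i + 1, by omega, i.2, rfl⟩)

theorem ncard_elemSymmSet_le (F : Type*) [CommSemiring F] (n : ℕ) :
    (elemSymmSet F n).ncard ≤ n := by
  have himage : elemSymmSet F n = (esymm (Fin n) F ·) '' Set.Icc 1 n := by
    ext f
    simp [elemSymmSet, eq_comm, and_assoc]
  calc (elemSymmSet F n).ncard ≤ (Set.Icc 1 n).ncard :=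
        himage ▸ Set.ncard_image_le (Set.finite_Icc 1 n)
    _ = n := by simp

theorem IsSeparatingSet.eval_eq_of_isSymmetric {F : Type*} [CommSemiring F] {n : ℕ}
    {T : Set (MvPolynomial (Fin n) F)} (hT : IsSeparatingSet T) {u v : Fin n → F}
    (h : ∀ g ∈ T, eval u g = eval v g) {f : MvPolynomial (Fin n) F} (hf : f.IsSymmetric) :
    eval u f = eval v f := by
  by_contra hne
  obtain ⟨g, hg, hgne⟩ := hT.2 u v ⟨f, hf, hne⟩
  exact hgne (h g hg)

theorem IsSeparatingSet.choose_le_pow_ncard {F : Type*} [CommRing F] [IsDomain F] [Fintype F]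
    {n : ℕ} {T : Set (MvPolynomial (Fin n) F)} (hT : IsSeparatingSet T) (hTfin : T.Finite) :
    (n + Fintype.card F - 1).choose n ≤ Fintype.card F ^ T.ncard := by
  classical
  choose rep hrep using fun s : Sym F n ↦ s.exists_map_univ_val_eq
  have hinj : Function.Injective fun (s : Sym F n) (g : hTfin.toFinset) ↦ eval (rep s) g.1 := by
    intro s₁ s₂ h
    have hT_eq : ∀ g ∈ T, eval (rep s₁) g = eval (rep s₂) g :=
      fun g hg ↦ congrFun h ⟨g, hTfin.mem_toFinset.2 hg⟩
    apply Sym.coe_injective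
    rw [← hrep, ← hrep]
    refine Multiset.eq_of_esymm_eq (by simp) fun j ↦ ?_
    simpa only [eval_esymm] using hT.eval_eq_of_isSymmetric hT_eq (esymm_isSymmetric _ _ j)
  simpa [Sym.card_sym_eq_choose, Set.ncard_eq_toFinset_card T hTfin, add_comm n]
    using Fintype.card_le_of_injective _ hinj

theorem stmt_17 (n : ℕ) (hn : 2 ≤ n) :
    ∃ q : ℕ, IsPrimePow q ∧ q ^ (n - 1) < Nat.choose (n + q - 1) n ∧
      ∀ (F : Type) [Field F] [Fintype F], Fintype.card F = q →
        IsSeparatingSet (elemSymmSet F n) ∧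
        ∀ T : Set (MvPolynomial (Fin n) F), IsSeparatingSet T → T.Finite →
          (elemSymmSet F n).ncard ≤ T.ncard := by
  have hchoose : (2 ^ n.factorial) ^ (n - 1) < (n + 2 ^ n.factorial - 1).choose n :=
    Nat.pow_pred_lt_choose_of_factorial_lt (by omega) Nat.lt_two_pow_self
  refine ⟨2 ^ n.factorial, Nat.prime_two.isPrimePow.pow n.factorial_ne_zero, hchoose,
    fun F _ _ hF ↦ ⟨isSeparatingSet_elemSymmSet F n, fun T hT hTfin ↦ ?_⟩⟩
  have hpow := hchoose.trans_le (hF ▸ hT.choose_le_pow_ncard hTfin)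
  have hlt := (Nat.pow_lt_pow_iff_right (Nat.one_lt_two_pow n.factorial_ne_zero)).1 hpow
  have hle := ncard_elemSymmSet_le F n
  omega
end

section
/- Let 𝔽_q be a finite field with q elements and n ≥ 2. The set S(n) of elementary symmetric polynomials is a separating set for the symmetric polynomials in n variables over 𝔽_q whose cardinality n equals the least possible cardinality of a separating set if and only if q^(n−1) < binom(n + q − 1, n). -/
open MvPolynomial

namespace SepAux

set_option linter.unusedSectionVars false

variable {α : Type*}

lemma exists_perm_of_perm_ofFn : ∀ {n : ℕ} (u v : Fin n → α),
    (List.ofFn u).Perm (List.ofFn v) → ∃ σ : Equiv.Perm (Fin n), u = v ∘ σ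
  | 0, u, v, _ => ⟨1, funext fun i => i.elim0⟩
  | n+1, u, v, h => by
    have h0 : u 0 ∈ List.ofFn v := h.mem_iff.mp (by simp [List.mem_ofFn])
    rw [List.mem_ofFn] at h0
    obtain ⟨j, hj⟩ := h0
    have hperm : (List.ofFn fun i : Fin n => u i.succ).Perm
        (List.ofFn fun i : Fin n => (v ∘ Equiv.swap 0 j) i.succ) := by
      have h2 : (List.ofFn u).Perm (List.ofFn (v ∘ Equiv.swap 0 j)) :=
        h.trans (Equiv.Perm.ofFn_comp_perm (Equiv.swap 0 j) v).symm
      rw [List.ofFn_succ, List.ofFn_succ] at h2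
      have hv0 : (v ∘ Equiv.swap 0 j) 0 = u 0 := by
        simp [Function.comp, Equiv.swap_apply_left, hj]
      rw [hv0] at h2
      exact h2.cons_inv
    obtain ⟨σ', hσ'⟩ := exists_perm_of_perm_ofFn _ _ hperm
    refine ⟨Equiv.Perm.decomposeFin.symm (j, σ'), funext fun i => ?_⟩
    refine Fin.cases ?_ (fun i => ?_) i
    · simp [Equiv.Perm.decomposeFin_symm_apply_zero, hj]
    · have := congrFun hσ' i
      simp only [Function.comp_apply] at this ⊢
      rw [Equiv.Perm.decomposeFin_symm_apply_succ]
      simpa using this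

lemma msOf_perm_eq {n : ℕ} (v : Fin n → α) (σ : Equiv.Perm (Fin n)) :
    Finset.univ.val.map (v ∘ σ) = Finset.univ.val.map v := by
  rw [Fin.univ_val_map, Fin.univ_val_map]
  exact Quot.sound (Equiv.Perm.ofFn_comp_perm σ v)

lemma exists_perm_of_msOf_eq {n : ℕ} {u v : Fin n → α}
    (h : Finset.univ.val.map u = Finset.univ.val.map v) :
    ∃ σ : Equiv.Perm (Fin n), u = v ∘ σ := by
  rw [Fin.univ_val_map, Fin.univ_val_map] at h
  exact exists_perm_of_perm_ofFn u v (Multiset.coe_eq_coe.mp h)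

/-- The multiset of coordinates, as an element of `Sym α n`. -/
def symOf {n : ℕ} (u : Fin n → α) : Sym α n := ⟨Finset.univ.val.map u, by simp⟩

lemma symOf_perm_eq {n : ℕ} (v : Fin n → α) (σ : Equiv.Perm (Fin n)) :
    symOf (v ∘ σ) = symOf v := Subtype.ext (msOf_perm_eq v σ)

lemma symOf_surjective {n : ℕ} :
    Function.Surjective (symOf : (Fin n → α) → Sym α n) := by
  rintro ⟨m, hm⟩
  induction m using Quotient.inductionOn with
  | h l =>
    have hl : l.length = n := by simpa using hm
    subst hl
    refine ⟨l.get, Subtype.ext ?_⟩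
    show Finset.univ.val.map l.get = _
    rw [Fin.univ_val_map]
    simp

variable {F : Type} [Field F] [Fintype F] {n : ℕ}

lemma eval_eq_of_msOf_eq {u v : Fin n → F}
    (h : ∃ σ : Equiv.Perm (Fin n), u = v ∘ σ)
    {f : MvPolynomial (Fin n) F} (hf : f.IsSymmetric) :
    eval u f = eval v f := by
  obtain ⟨σ, rfl⟩ := h
  conv_rhs => rw [← hf σ]
  rw [eval_rename]

lemma rename_indicator (σ : Equiv.Perm (Fin n)) (a : Fin n → F) :
    rename (⇑σ) (indicator a) = indicator (a ∘ ⇑σ.symm) := by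
  rw [indicator, indicator, map_prod]
  simp only [map_sub, map_one, map_pow, rename_X, rename_C]
  rw [← Equiv.prod_comp σ
    (fun j => 1 - (X j - C ((a ∘ ⇑σ.symm) j)) ^ (Fintype.card F - 1))]
  refine Finset.prod_congr rfl fun i _ => ?_
  simp

lemma exists_symmetric_eval (g : (Fin n → F) → F)
    (hg : ∀ (σ : Equiv.Perm (Fin n)) (u : Fin n → F), g (u ∘ σ) = g u) :
    ∃ p : MvPolynomial (Fin n) F, p.IsSymmetric ∧ ∀ u, eval u p = g u := by
  classical
  refine ⟨∑ a : Fin n → F, C (g a) * indicator a, fun σ => ?_, fun u => ?_⟩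
  · rw [map_sum]
    simp only [map_mul, rename_C, rename_indicator]
    refine Fintype.sum_equiv (Equiv.arrowCongr σ (Equiv.refl F)) _ _ fun a => ?_
    have h1 : (Equiv.arrowCongr σ (Equiv.refl F)) a = a ∘ ⇑σ.symm := by
      funext i; simp [Equiv.arrowCongr]
    have h2 : g (a ∘ ⇑σ.symm) = g a := hg σ.symm a
    rw [h1, h2]
  · rw [map_sum]
    rw [Finset.sum_eq_single u]
    · simp [eval_indicator_apply_eq_one]
    · intro b _ hb
      rw [map_mul, eval_indicator_apply_eq_zero u b (Ne.symm hb), mul_zero]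
    · intro h; exact absurd (Finset.mem_univ u) h

lemma msOf_eq_of_esymm_eq {u v : Fin n → F}
    (h : ∀ t, 1 ≤ t → t ≤ n →
      eval u (esymm (Fin n) F t) = eval v (esymm (Fin n) F t)) :
    Finset.univ.val.map u = Finset.univ.val.map v := by
  have heval : ∀ (w : Fin n → F) (t : ℕ),
      eval w (esymm (Fin n) F t) = (Finset.univ.val.map w).esymm t := by
    intro w t
    rw [esymm, map_sum]
    simp only [map_prod, eval_X]
    rw [Finset.esymm_map_val]
  have hcard : ∀ w : Fin n → F, Multiset.card (Finset.univ.val.map w) = n := by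
    intro w; simp
  have key : ((Finset.univ.val.map u).map fun t => Polynomial.X - Polynomial.C t).prod
      = ((Finset.univ.val.map v).map fun t => Polynomial.X - Polynomial.C t).prod := by
    apply Polynomial.ext
    intro k
    rcases le_or_gt k n with hk | hk
    · rw [Multiset.prod_X_sub_C_coeff _ (by rw [hcard]; exact hk),
        Multiset.prod_X_sub_C_coeff _ (by rw [hcard]; exact hk), hcard, hcard]
      congr 1
      rcases Nat.eq_zero_or_pos (n - k) with h0 | h0
      · rw [h0, Multiset.esymm, Multiset.esymm]
        simp
      · have := h (n - k) h0 (Nat.sub_le _ _)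
        rw [heval, heval] at this
        exact this
    · have hd : ∀ w : Fin n → F,
          (((Finset.univ.val.map w).map fun t =>
            Polynomial.X - Polynomial.C t).prod).natDegree = n := by
        intro w
        rw [Polynomial.natDegree_multiset_prod_X_sub_C_eq_card, hcard]
      rw [Polynomial.coeff_eq_zero_of_natDegree_lt (by rw [hd]; exact hk),
        Polynomial.coeff_eq_zero_of_natDegree_lt (by rw [hd]; exact hk)]
  have hroots := congrArg Polynomial.roots key
  rwa [Polynomial.roots_multiset_prod_X_sub_C, Polynomial.roots_multiset_prod_X_sub_C] at hroots

lemma esymm_inj {a b : ℕ} (ha2 : a ≤ n) (hb2 : b ≤ n)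
    (h : esymm (Fin n) F a = esymm (Fin n) F b) : a = b := by
  classical
  have hdeg : ∀ (A : Finset (Fin n)),
      Multiset.card (Finsupp.toMultiset (∑ i ∈ A, Finsupp.single i 1)) = A.card := by
    intro A
    rw [map_sum]
    simp [Finsupp.toMultiset_single]
  obtain ⟨A, hAsub, hA⟩ := Finset.exists_subset_card_eq
    (show a ≤ (Finset.univ : Finset (Fin n)).card by simpa using ha2)
  have hsup := congrArg MvPolynomial.support h
  rw [support_esymm, support_esymm] at hsup
  have hmem : (∑ i ∈ A, Finsupp.single i 1) ∈
      (Finset.powersetCard b (Finset.univ : Finset (Fin n))).image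
        fun t => ∑ i ∈ t, Finsupp.single i (1 : ℕ) := by
    rw [← hsup]
    exact Finset.mem_image_of_mem _ (Finset.mem_powersetCard_univ.mpr hA)
  obtain ⟨B, hB, hBA⟩ := Finset.mem_image.mp hmem
  have := congrArg (fun μ => Multiset.card (Finsupp.toMultiset μ)) hBA
  simp only [hdeg] at this
  rw [← hA, ← this, (Finset.mem_powersetCard_univ.mp hB)]

lemma exists_symmetric_sep {u w : Fin n → F}
    (h : Finset.univ.val.map u ≠ Finset.univ.val.map w) :
    ∃ f : MvPolynomial (Fin n) F, f.IsSymmetric ∧ eval u f ≠ eval w f := by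
  classical
  obtain ⟨p, hp, hpe⟩ := exists_symmetric_eval
    (fun x => if Finset.univ.val.map x = Finset.univ.val.map u then (1 : F) else 0)
    (by intro σ x; simp only [msOf_perm_eq])
  refine ⟨p, hp, ?_⟩
  rw [hpe, hpe, if_pos rfl, if_neg (fun hc => h hc.symm)]
  exact one_ne_zero

end SepAux

open SepAux

theorem stmt_18 (q n : ℕ) (hn : 2 ≤ n) (F : Type) [Field F] [Fintype F]
    (hF : Fintype.card F = q) :
    (IsSeparatingSet (elemSymmSet F n) ∧ (elemSymmSet F n).ncard = n ∧
      ∀ T : Set (MvPolynomial (Fin n) F), IsSeparatingSet T → T.Finite → n ≤ T.ncard)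
    ↔ q ^ (n - 1) < Nat.choose (n + q - 1) n := by
  classical
  subst hF
  have hq1 : 1 ≤ Fintype.card F := Fintype.card_pos
  have hcardSym : Fintype.card (Sym F n) = (n + Fintype.card F - 1).choose n := by
    rw [Sym.card_sym_eq_choose]
    congr 1
    omega
  have hsep : IsSeparatingSet (elemSymmSet F n) := by
    constructor
    · rintro f ⟨t, -, -, rfl⟩
      exact esymm_isSymmetric _ _ t
    · rintro u v ⟨f, hf, hne⟩
      by_contra hc
      push_neg at hc
      apply hne
      apply eval_eq_of_msOf_eq _ hf
      apply exists_perm_of_msOf_eq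
      apply msOf_eq_of_esymm_eq
      intro t ht1 ht2
      exact hc _ ⟨t, ht1, ht2, rfl⟩
  have hcard : (elemSymmSet F n).ncard = n := by
    have hinj : Set.InjOn (fun t => esymm (Fin n) F t) (Finset.Icc 1 n) := by
      intro a ha b hb hab
      rw [Finset.coe_Icc, Set.mem_Icc] at ha hb
      exact esymm_inj ha.2 hb.2 hab
    have heq : elemSymmSet F n = ↑((Finset.Icc 1 n).image fun t => esymm (Fin n) F t) := by
      ext f
      simp only [elemSymmSet, Set.mem_setOf_eq, Finset.coe_image, Set.mem_image,
        Finset.mem_coe, Finset.mem_Icc]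
      constructor
      · rintro ⟨t, h1, h2, rfl⟩; exact ⟨t, ⟨h1, h2⟩, rfl⟩
      · rintro ⟨t, ⟨h1, h2⟩, rfl⟩; exact ⟨t, h1, h2, rfl⟩
    rw [heq, Set.ncard_coe_finset, Finset.card_image_of_injOn hinj, Nat.card_Icc]
    omega
  constructor
  · rintro ⟨-, -, hmin⟩
    by_contra hnot
    push_neg at hnot
    have hle : Fintype.card (Sym F n) ≤ Fintype.card (Fin (n-1) → F) := by
      rw [hcardSym, Fintype.card_fun, Fintype.card_fin]
      exact hnot
    obtain ⟨ι⟩ := Function.Embedding.nonempty_of_card_le hle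
    have hg : ∀ i : Fin (n-1), ∃ p : MvPolynomial (Fin n) F, p.IsSymmetric ∧
        ∀ u, eval u p = ι (symOf u) i := by
      intro i
      apply exists_symmetric_eval
      intro σ u
      rw [symOf_perm_eq]
    choose p hpsym hpeval using hg
    have hTsep : IsSeparatingSet (Set.range p) := by
      constructor
      · rintro f ⟨i, rfl⟩
        exact hpsym i
      · rintro u v ⟨f, hf, hne⟩
        have hms : Finset.univ.val.map u ≠ Finset.univ.val.map v := by
          intro hms
          exact hne (eval_eq_of_msOf_eq (exists_perm_of_msOf_eq hms) hf)
        have hsym2 : symOf u ≠ symOf v := fun hc => hms (congrArg Subtype.val hc)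
        have hι : ι (symOf u) ≠ ι (symOf v) := fun hc => hsym2 (ι.injective hc)
        obtain ⟨i, hi⟩ := Function.ne_iff.mp hι
        exact ⟨p i, ⟨i, rfl⟩, by rw [hpeval, hpeval]; exact hi⟩
    have hTC : (Set.range p).ncard ≤ n - 1 := by
      rw [← Set.image_univ]
      calc (p '' Set.univ).ncard ≤ (Set.univ : Set (Fin (n-1))).ncard :=
            Set.ncard_image_le Set.finite_univ
        _ = n - 1 := by rw [Set.ncard_univ, Nat.card_eq_fintype_card, Fintype.card_fin]
    have := hmin (Set.range p) hTsep (Set.finite_range p)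
    omega
  · intro hlt
    refine ⟨hsep, hcard, ?_⟩
    intro T hTsep hTfin
    by_contra hTc
    push_neg at hTc
    haveI := hTfin.fintype
    have hrep : ∀ s : Sym F n, symOf (Function.surjInv (symOf_surjective (α := F) (n := n)) s) = s :=
      Function.surjInv_eq symOf_surjective
    set rep := Function.surjInv (symOf_surjective (α := F) (n := n)) with hrepdef
    have hΦ : Function.Injective
        (fun s : Sym F n => fun f : T => eval (rep s) (f : MvPolynomial (Fin n) F)) := by
      intro s t hst
      by_contra hne
      have hms : Finset.univ.val.map (rep s) ≠ Finset.univ.val.map (rep t) := by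
        intro hms
        exact hne (by rw [← hrep s, ← hrep t]; exact Subtype.ext hms)
      obtain ⟨f, hfs, hfne⟩ := hTsep.2 (rep s) (rep t) (exists_symmetric_sep hms)
      exact hfne (congrFun hst ⟨f, hfs⟩)
    have hcards : Fintype.card (Sym F n) ≤ Fintype.card (T → F) :=
      Fintype.card_le_of_injective _ hΦ
    rw [hcardSym, Fintype.card_fun] at hcards
    have hTn : Fintype.card T = T.ncard := by
      rw [← Nat.card_eq_fintype_card]
      exact Nat.card_coe_set_eq T
    have hpow : Fintype.card F ^ Fintype.card T ≤ Fintype.card F ^ (n - 1) := by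
      apply Nat.pow_le_pow_right hq1
      omega
    exact absurd hlt (not_lt.mpr (hcards.trans hpow))
end

section
/- Let 𝔽_q be a finite field with q elements and n ≥ 2. The least possible number of elements of a separating set for the symmetric polynomials in n variables over 𝔽_q equals γ_q(n) = ⌈log_q ((n+q−1)(n+q−2)⋯(n+1) / (q−1)!)⌉ = ⌈log_q binom(n+q−1, q−1)⌉. -/
/-! Two points of `F^n` are separated by symmetric polynomials exactly when their multisets of
coordinates differ: symmetric polynomials are constant on orbits of `S_n`, and conversely over a
finite field every `S_n`-invariant function `F^n → F` is interpolated by a symmetric polynomial.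
So a finite set `S` is separating iff `u ↦ (f u)_{f ∈ S}` is injective on the
`binom(n+q-1, q-1)` multisets of size `n`, which forces `q ^ |S| ≥ binom(n+q-1, q-1)`; conversely,
interpolating the coordinates of an injection of these multisets into `F^k` gives a separating
set with at most `k` elements. -/

open MvPolynomial Finset Function

theorem exists_perm_eq_comp_of_map_univ_eq {σ α : Type*} [Fintype σ] {u v : σ → α}
    (h : univ.val.map u = univ.val.map v) : ∃ e : Equiv.Perm σ, u = v ∘ e := by
  classical
  have hfiber (a : α) : Fintype.card {i // u i = a} = Fintype.card {i // v i = a} := by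
    have := congrArg (Multiset.count a) h
    simp only [Multiset.count_map, @eq_comm _ a] at this
    simpa only [Fintype.card_subtype, Finset.card_def, Finset.filter_val] using this
  exact ⟨Equiv.ofFiberEquiv fun a => Fintype.equivOfCardEq (hfiber a),
    funext fun i => (Equiv.ofFiberEquiv_map _ i).symm⟩

namespace MvPolynomial

variable {σ τ K : Type*} [Field K]

section Interpolation

variable [Fintype σ] [Fintype K]

theorem rename_indicator [Fintype τ] (e : σ ≃ τ) (a : σ → K) :
    rename e (indicator a) = indicator (a ∘ e.symm) := by
  simp only [indicator, map_prod, map_sub, map_one, map_pow, rename_X, rename_C]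
  exact Fintype.prod_equiv e _ _ fun i => by simp

variable [DecidableEq σ]

noncomputable def interpolate (g : (σ → K) → K) : MvPolynomial σ K :=
  ∑ a, C (g a) * indicator a

theorem eval_interpolate (g : (σ → K) → K) (b : σ → K) : eval b (interpolate g) = g b := by
  rw [interpolate, map_sum, Finset.sum_eq_single_of_mem b (mem_univ b)]
  · rw [map_mul, eval_indicator_apply_eq_one, eval_C, mul_one]
  · intro a _ hab
    rw [map_mul, eval_indicator_apply_eq_zero b a hab.symm, mul_zero]

theorem isSymmetric_interpolate {g : (σ → K) → K}
    (hg : ∀ (e : Equiv.Perm σ) (u : σ → K), g (u ∘ e) = g u) :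
    (interpolate g).IsSymmetric := by
  intro e
  simp only [interpolate, map_sum, map_mul, rename_C, rename_indicator]
  refine Fintype.sum_equiv (e.arrowCongr (Equiv.refl K)) _ _ fun a => ?_
  rw [show e.arrowCongr (Equiv.refl K) a = a ∘ e.symm from rfl, hg]

end Interpolation

theorem IsSymmetric.eval_comp_perm {f : MvPolynomial σ K} (hf : f.IsSymmetric)
    (u : σ → K) (e : Equiv.Perm σ) : eval (u ∘ e) f = eval u f := by
  rw [← eval_rename, hf e]

end MvPolynomial

namespace Sym

variable {α : Type*} {n : ℕ}

def ofFn (u : Fin n → α) : Sym α n := ⟨univ.val.map u, by simp⟩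

theorem ofFn_comp_perm (u : Fin n → α) (e : Equiv.Perm (Fin n)) : ofFn (u ∘ e) = ofFn u := by
  ext1
  simp only [ofFn, ← Multiset.map_map, Multiset.map_univ_val_equiv]

theorem ofFn_surjective : Surjective (ofFn : (Fin n → α) → Sym α n) := by
  rintro ⟨s, hs⟩
  induction s using Quotient.inductionOn with
  | h l =>
    obtain rfl : l.length = n := by simpa using hs
    exact ⟨l.get, Subtype.ext <| by simp [ofFn]⟩

theorem exists_perm_of_ofFn_eq {u v : Fin n → α} (h : ofFn u = ofFn v) :
    ∃ e : Equiv.Perm (Fin n), u = v ∘ e :=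
  exists_perm_eq_comp_of_map_univ_eq (congrArg Sym.toMultiset h)

end Sym

section Separation

variable {F : Type*} [Field F] [Fintype F] {n : ℕ}

theorem exists_isSymmetric_eval_ne_iff {u v : Fin n → F} :
    (∃ f : MvPolynomial (Fin n) F, f.IsSymmetric ∧ eval u f ≠ eval v f) ↔
      Sym.ofFn u ≠ Sym.ofFn v := by
  classical
  constructor
  · rintro ⟨f, hf, hne⟩ heq
    obtain ⟨e, rfl⟩ := Sym.exists_perm_of_ofFn_eq heq
    exact hne (hf.eval_comp_perm v e)
  · intro hne
    let g : (Fin n → F) → F := fun w => if Sym.ofFn w = Sym.ofFn u then 1 else 0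
    refine ⟨interpolate g, isSymmetric_interpolate fun e w => ?_, ?_⟩
    · simp only [g, Sym.ofFn_comp_perm]
    · simp [eval_interpolate, g, Ne.symm hne]

theorem IsSeparatingSet.card_sym_le [DecidableEq F] {S : Set (MvPolynomial (Fin n) F)}
    (hS : IsSeparatingSet S) (hfin : S.Finite) :
    Fintype.card (Sym F n) ≤ Fintype.card F ^ S.ncard := by
  have := hfin.fintype
  obtain ⟨w, hw⟩ := (Sym.ofFn_surjective (α := F) (n := n)).hasRightInverse
  have hinj : Injective fun (s : Sym F n) (f : S) => eval (w s) (f : MvPolynomial (Fin n) F) := by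
    intro s s' h
    by_contra hne
    obtain ⟨f, hfS, hf⟩ := hS.2 (w s) (w s') <|
      exists_isSymmetric_eval_ne_iff.2 (by rwa [hw s, hw s'])
    exact hf (congrFun h ⟨f, hfS⟩)
  calc Fintype.card (Sym F n) ≤ Fintype.card (S → F) := Fintype.card_le_of_injective _ hinj
    _ = Fintype.card F ^ S.ncard := by
      rw [Fintype.card_fun, ← Nat.card_eq_fintype_card (α := S), Nat.card_coe_set_eq]

theorem exists_isSeparatingSet_ncard_le [DecidableEq F] {k : ℕ}
    (h : Fintype.card (Sym F n) ≤ Fintype.card F ^ k) :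
    ∃ S : Set (MvPolynomial (Fin n) F), IsSeparatingSet S ∧ S.Finite ∧ S.ncard ≤ k := by
  obtain ⟨ι⟩ := Function.Embedding.nonempty_of_card_le (β := Fin k → F) (by simpa using h)
  let P (i : Fin k) : MvPolynomial (Fin n) F := interpolate fun u => ι (Sym.ofFn u) i
  have hP (i : Fin k) (u : Fin n → F) : eval u (P i) = ι (Sym.ofFn u) i := eval_interpolate _ _
  refine ⟨Set.range P, ⟨?_, ?_⟩, Set.finite_range P, ?_⟩
  · rintro _ ⟨i, rfl⟩
    exact isSymmetric_interpolate fun e u => by rw [Sym.ofFn_comp_perm]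
  · intro u v huv
    obtain ⟨i, hi⟩ := Function.ne_iff.1 (ι.injective.ne (exists_isSymmetric_eval_ne_iff.1 huv))
    exact ⟨P i, ⟨i, rfl⟩, by rwa [hP, hP]⟩
  · rw [← Set.image_univ]
    simpa using Set.ncard_image_le (f := P) (s := Set.univ)

theorem card_sym_eq_choose_pred [DecidableEq F] :
    Fintype.card (Sym F n) = (n + Fintype.card F - 1).choose (Fintype.card F - 1) := by
  have hq : 1 ≤ Fintype.card F := Fintype.card_pos
  rw [Sym.card_sym_eq_choose, show Fintype.card F + n - 1 = n + (Fintype.card F - 1) by omega,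
    show n + Fintype.card F - 1 = n + (Fintype.card F - 1) by omega, Nat.choose_symm_add]

end Separation

theorem stmt_19_general (q n : ℕ) (F : Type) [Field F] [Fintype F]
    (hF : Fintype.card F = q) :
    (∃ S : Set (MvPolynomial (Fin n) F), IsSeparatingSet S ∧ S.Finite ∧
      (S.ncard : ℤ) = ⌈Real.logb q (Nat.choose (n + q - 1) (q - 1))⌉) ∧
    ∀ S : Set (MvPolynomial (Fin n) F), IsSeparatingSet S → S.Finite →
      ⌈Real.logb q (Nat.choose (n + q - 1) (q - 1))⌉ ≤ (S.ncard : ℤ) := by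
  classical
  subst hF
  rw [← card_sym_eq_choose_pred, Real.ceil_logb_natCast (Nat.cast_nonneg _), Int.clog_natCast]
  have hmin (S : Set (MvPolynomial (Fin n) F)) (hS : IsSeparatingSet S) (hfin : S.Finite) :
      Nat.clog (Fintype.card F) (Fintype.card (Sym F n)) ≤ S.ncard :=
    Nat.clog_le_of_le_pow (hS.card_sym_le hfin)
  obtain ⟨S, hS, hfin, hle⟩ :=
    exists_isSeparatingSet_ncard_le (Nat.le_pow_clog (Fintype.one_lt_card (α := F)) _)
  exact ⟨⟨S, hS, hfin, by exact_mod_cast le_antisymm hle (hmin S hS hfin)⟩,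
    fun S hS hfin => by exact_mod_cast hmin S hS hfin⟩

theorem stmt_19 (q n : ℕ) (hn : 2 ≤ n) (F : Type) [Field F] [Fintype F]
    (hF : Fintype.card F = q) :
    (∃ S : Set (MvPolynomial (Fin n) F), IsSeparatingSet S ∧ S.Finite ∧
      (S.ncard : ℤ) = ⌈Real.logb q (Nat.choose (n + q - 1) (q - 1))⌉) ∧
    ∀ S : Set (MvPolynomial (Fin n) F), IsSeparatingSet S → S.Finite →
      ⌈Real.logb q (Nat.choose (n + q - 1) (q - 1))⌉ ≤ (S.ncard : ℤ) :=
  stmt_19_general q n F hF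
end
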